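/- Let I be a monomial ideal in R = k[x_1,...,x_n] with polarization P(I) in S = k[x_{i,j}]. Then (x_{i_1},...,x_{i_r}) is an associated prime of R/I if and only if there exist positive integers c_1,...,c_r such that (x_{i_1,c_1},...,x_{i_r,c_r}) is an associated prime of S/P(I). -/

import Mathlib

open MvPolynomial

/-! ### Auxiliary combinatorial lemmas -/

section Comb
variable {n q m : ℕ} (A : Fin q → Fin n → ℕ) (s : Finset (Fin n))

/-- R-side combinatorial condition -/
def CRfun (b : Fin n → ℕ) : Prop :=
  (∀ i ∈ s, ∃ t, ∀ i', A t i' ≤ b i' + (if i = i' then 1 else 0)) ∧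
    ∀ t, ∃ i ∈ s, b i < A t i

/-- S-side combinatorial condition -/
def CSfun (c : Fin n → Fin (m + 1)) (E : Fin n × Fin (m + 1) → ℕ) : Prop :=
  (∀ i ∈ s, ∃ t, ∀ p : Fin n × Fin (m + 1), ((p.2 : ℕ) < A t p.1) →
      1 ≤ E p + (if (i, c i) = p then 1 else 0)) ∧
    ∀ t, ∃ i ∈ s, (c i : ℕ) < A t i ∧ E (i, c i) = 0
end Comb

section Comb2
variable {n q m : ℕ} (A : Fin q → Fin n → ℕ) (s : Finset (Fin n))
theorem comb_forward (hA : ∀ t i, A t i ≤ m + 1) {b : Fin n → ℕ} (hb : CRfun A s b) :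
    ∃ (c : Fin n → Fin (m + 1)) (E : Fin n × Fin (m + 1) → ℕ), CSfun A s c E := by
  obtain ⟨h1, h2⟩ := hb
  have hbm : ∀ i ∈ s, b i ≤ m := by
    intro i hi
    obtain ⟨t, ht⟩ := h1 i hi
    obtain ⟨i'', hi'', hlt⟩ := h2 t
    have hti'' := ht i''
    have hti := ht i
    have hA1 := hA t i
    by_cases h : i = i''
    · subst h; simp only [if_pos rfl] at hti; omega
    · rw [if_neg h] at hti''; omega
  refine ⟨fun i => ⟨min (b i) m, by omega⟩,
    fun p => if (p.2 : ℕ) < min (b p.1) (m + 1) then 1 else 0, ?_, ?_⟩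
  · intro i hi
    obtain ⟨t, ht⟩ := h1 i hi
    refine ⟨t, ?_⟩
    rintro ⟨i', j⟩ hp
    dsimp only at hp ⊢
    by_cases hpe : ((i, (⟨min (b i) m, by omega⟩ : Fin (m+1))) : Fin n × Fin (m+1)) = (i', j)
    · rw [if_pos hpe]; omega
    · rw [if_neg hpe]
      have hj : (j : ℕ) < m + 1 := j.2
      have hti' := ht i'
      by_cases h : i = i'
      · subst h
        rw [if_pos rfl] at hti'
        have hbi : b i ≤ m := hbm i hi
        have hne : (j : ℕ) ≠ b i := by
          intro hje
          apply hpe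
          have hmin : min (b i) m = (j : ℕ) := by omega
          exact Prod.ext rfl (Fin.ext (by simpa using hmin))
        have : (j : ℕ) < min (b i) (m + 1) := by omega
        rw [if_pos this]
      · simp only [if_neg h] at hti'
        have : (j : ℕ) < min (b i') (m + 1) := by omega
        rw [if_pos this]
  · intro t
    obtain ⟨i, hi, hlt⟩ := h2 t
    have hbi : b i ≤ m := hbm i hi
    refine ⟨i, hi, ?_, ?_⟩
    · show (min (b i) m : ℕ) < A t i
      omega
    · show (if ((min (b i) m : ℕ)) < min (b i) (m + 1) then 1 else 0) = 0
      rw [if_neg (by omega)]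

theorem comb_backward (hA : ∀ t i, A t i ≤ m + 1) {c : Fin n → Fin (m + 1)}
    {E : Fin n × Fin (m + 1) → ℕ} (h : CSfun A s c E) : ∃ b, CRfun A s b := by
  classical
  obtain ⟨h1, h2⟩ := h
  have key : ∀ i : Fin n, ∃ v : ℕ,
      (∀ hv : v < m + 1, E (i, ⟨v, hv⟩) = 0) ∧ (E (i, c i) = 0 → v = (c i : ℕ)) := by
    intro i
    by_cases hE : E (i, c i) = 0
    · refine ⟨(c i : ℕ), fun hv => ?_, fun _ => rfl⟩
      have : (⟨(c i : ℕ), hv⟩ : Fin (m + 1)) = c i := Fin.ext rfl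
      rw [this]; exact hE
    · have hPex : ∃ j : ℕ, j = m + 1 ∨ ∃ hj : j < m + 1, E (i, ⟨j, hj⟩) = 0 :=
        ⟨m + 1, Or.inl rfl⟩
      refine ⟨Nat.find hPex, fun hv => ?_, fun hh => absurd hh hE⟩
      rcases Nat.find_spec hPex with h' | ⟨hj, hEj⟩
      · omega
      · exact hEj
  choose c₁ hK1 hK2 using key
  have H1 : ∀ i ∈ s, ∃ t, ∀ i' ∈ s, i' ≠ i → A t i' ≤ c₁ i' := by
    intro i hi
    obtain ⟨t, ht⟩ := h1 i hi
    refine ⟨t, ?_⟩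
    intro i' _ hne
    by_contra hgt
    push_neg at hgt
    have hv : c₁ i' < m + 1 := by have := hA t i'; omega
    have hhole := hK1 i' hv
    have := ht (i', ⟨c₁ i', hv⟩) (by dsimp only; omega)
    rw [if_neg (by intro hh; exact hne (congrArg Prod.fst hh).symm)] at this
    omega
  have H2 : ∀ t, ∃ i ∈ s, c₁ i < A t i := by
    intro t
    obtain ⟨i, hi, hlt, hE⟩ := h2 t
    refine ⟨i, hi, ?_⟩
    rw [hK2 i hE]; exact hlt
  clear h1 h2 hK1 hK2
  -- greedy raising: strong induction on the measure
  have main : ∀ N (b : Fin n → ℕ), (∑ i ∈ s, (m + 1 - min (b i) (m + 1))) ≤ N →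
      (∀ i ∈ s, ∃ t, ∀ i' ∈ s, i' ≠ i → A t i' ≤ b i') →
      (∀ t, ∃ i ∈ s, b i < A t i) → ∃ b', CRfun A s b' := by
    intro N
    induction N with
    | zero =>
      intro b hμ hH1 hH2
      refine ⟨fun i => if i ∈ s then b i else m + 1, ?_, ?_⟩
      · intro i hi
        obtain ⟨t, ht⟩ := hH1 i hi
        refine ⟨t, fun i' => ?_⟩
        dsimp only
        by_cases hi's : i' ∈ s
        · rw [if_pos hi's]
          by_cases he : i = i'
          · subst he
            have h0 : m + 1 - min (b i) (m + 1) = 0 :=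
              Finset.sum_eq_zero_iff.mp (Nat.le_zero.mp hμ) i hi
            have := hA t i
            omega
          · have := ht i' hi's (fun hh => he hh.symm)
            rw [if_neg he]; omega
        · rw [if_neg hi's, if_neg (by rintro rfl; exact hi's hi)]
          have := hA t i'; omega
      · intro t
        obtain ⟨i, hi, hlt⟩ := hH2 t
        exact ⟨i, hi, by dsimp only; rw [if_pos hi]; exact hlt⟩
    | succ N ih =>
      intro b hμ hH1 hH2
      by_cases hSat : ∀ i ∈ s, ∃ t, (∀ i' ∈ s, i' ≠ i → A t i' ≤ b i') ∧ A t i ≤ b i + 1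
      · refine ⟨fun i => if i ∈ s then b i else m + 1, ?_, ?_⟩
        · intro i hi
          obtain ⟨t, ht, hti⟩ := hSat i hi
          refine ⟨t, fun i' => ?_⟩
          dsimp only
          by_cases hi's : i' ∈ s
          · rw [if_pos hi's]
            by_cases he : i = i'
            · subst he; rw [if_pos rfl]; omega
            · have := ht i' hi's (fun hh => he hh.symm)
              rw [if_neg he]; omega
          · rw [if_neg hi's, if_neg (by rintro rfl; exact hi's hi)]
            have := hA t i'; omega
        · intro t
          obtain ⟨i, hi, hlt⟩ := hH2 t
          exact ⟨i, hi, by dsimp only; rw [if_pos hi]; exact hlt⟩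
      · push_neg at hSat
        obtain ⟨i₀, hi₀, hraise⟩ := hSat
        obtain ⟨t₀, ht₀⟩ := hH1 i₀ hi₀
        have hne : (Finset.univ.filter fun t => ∀ i' ∈ s, i' ≠ i₀ → A t i' ≤ b i').Nonempty :=
          ⟨t₀, by simp only [Finset.mem_filter, Finset.mem_univ, true_and]; exact ht₀⟩
        obtain ⟨tm, htm, hmin⟩ := Finset.exists_min_image _ (fun t => A t i₀) hne
        simp only [Finset.mem_filter, Finset.mem_univ, true_and] at htm
        have hbig : b i₀ + 1 < A tm i₀ := by
          have := hraise tm htm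
          omega
        have hvm : A tm i₀ - 1 ≤ m := by have := hA tm i₀; omega
        set b₁ := Function.update b i₀ (A tm i₀ - 1) with hb₁
        have hb₁i₀ : b₁ i₀ = A tm i₀ - 1 := Function.update_self _ _ _
        have hb₁ne : ∀ i, i ≠ i₀ → b₁ i = b i := fun i h => Function.update_of_ne h _ _
        have hble : ∀ i, b i ≤ b₁ i := by
          intro i
          by_cases h : i = i₀
          · subst h; rw [hb₁i₀]; omega
          · rw [hb₁ne i h]
        apply ih b₁
        · have hlt : (∑ i ∈ s, (m + 1 - min (b₁ i) (m + 1))) <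
              (∑ i ∈ s, (m + 1 - min (b i) (m + 1))) := by
            apply Finset.sum_lt_sum
            · intro i _
              have := hble i; omega
            · refine ⟨i₀, hi₀, ?_⟩
              rw [hb₁i₀]; omega
          omega
        · intro i hi
          obtain ⟨t, ht⟩ := hH1 i hi
          exact ⟨t, fun i' hi' hne' => le_trans (ht i' hi' hne') (hble i')⟩
        · intro t
          obtain ⟨i, hi, hlt⟩ := hH2 t
          by_cases h : i = i₀
          · subst h
            by_cases hvalid : ∀ i' ∈ s, i' ≠ i → A t i' ≤ b i'
            · have htmem : t ∈ Finset.univ.filter fun t => ∀ i' ∈ s, i' ≠ i → A t i' ≤ b i' := by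
                simp only [Finset.mem_filter, Finset.mem_univ, true_and]
                exact hvalid
              have := hmin t htmem
              refine ⟨i, hi, ?_⟩
              rw [hb₁i₀]; omega
            · push_neg at hvalid
              obtain ⟨i', hi's, hne', hgt⟩ := hvalid
              refine ⟨i', hi's, ?_⟩
              rw [hb₁ne i' hne']; omega
          · exact ⟨i, hi, by rw [hb₁ne i h]; exact hlt⟩
  exact main _ c₁ le_rfl H1 H2

end Comb2

/-! ### Auxiliary algebra lemmas -/

section Alg
variable {k : Type} [Field k] {σ : Type*} {q : ℕ}
theorem prod_monomial_one {α : Type*} (s : Finset α) (g : α → (σ →₀ ℕ)) :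
    (∏ x ∈ s, (monomial (g x) (1 : k))) = monomial (∑ x ∈ s, g x) 1 := by
  classical
  induction s using Finset.cons_induction with
  | empty => simp [MvPolynomial.monomial_zero']
  | cons a s ha ih =>
    rw [Finset.prod_cons, ih, monomial_mul, one_mul, Finset.sum_cons]

theorem hXmono (i : σ) : (X i : MvPolynomial σ k) = monomial (Finsupp.single i 1) 1 := by
  rw [← X_pow_eq_monomial, pow_one]

theorem mem_monomial_ideal (u : Fin q → σ →₀ ℕ) (f : MvPolynomial σ k) :
    f ∈ Ideal.span (Set.range fun t => (monomial (u t) (1 : k))) ↔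
      ∀ d ∈ f.support, ∃ t, u t ≤ d := by
  have hr : (Set.range fun t => (monomial (u t) (1 : k))) =
      (fun e => monomial e (1 : k)) '' Set.range u := by
    rw [← Set.range_comp]; rfl
  rw [hr, mem_ideal_span_monomial_image]
  constructor
  · intro h d hd
    obtain ⟨si, ⟨t, rfl⟩, hle⟩ := h d hd
    exact ⟨t, hle⟩
  · intro h d hd
    obtain ⟨t, hle⟩ := h d hd
    exact ⟨u t, ⟨t, rfl⟩, hle⟩

/-- The "set to zero" endomorphism killing the variables in S. -/
noncomputable def killS (S : Set σ) : MvPolynomial σ k →ₐ[k] MvPolynomial σ k := by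
  classical
  exact aeval (fun i => if i ∈ S then 0 else X i)

theorem killS_monomial_zero (S : Set σ) (d : σ →₀ ℕ) (r : k) (i : σ) (hi : i ∈ S)
    (hdi : d i ≠ 0) : killS S (monomial d r) = 0 := by
  classical
  rw [killS]
  simp only [aeval_monomial]
  rw [Finsupp.prod, Finset.prod_eq_zero (Finsupp.mem_support_iff.mpr hdi), mul_zero]
  rw [if_pos hi, zero_pow hdi]

theorem killS_monomial_id (S : Set σ) (d : σ →₀ ℕ) (r : k) (h : ∀ i ∈ S, d i = 0) :
    killS S (monomial d r) = monomial d r := by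
  classical
  rw [killS]
  simp only [aeval_monomial]
  rw [Finsupp.prod]
  have hc : ∀ i ∈ d.support,
      (if i ∈ S then (0 : MvPolynomial σ k) else X i) ^ d i = X i ^ d i := by
    intro i hi
    rw [if_neg fun hiS => Finsupp.mem_support_iff.mp hi (h i hiS)]
  rw [Finset.prod_congr rfl hc, monomial_eq, Finsupp.prod]
  rfl

theorem mem_span_X_iff_killS (S : Set σ) (f : MvPolynomial σ k) :
    f ∈ Ideal.span ((fun i => (X i : MvPolynomial σ k)) '' S) ↔ killS S f = 0 := by
  classical
  constructor
  · intro hf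
    have hle : Ideal.span ((fun i => (X i : MvPolynomial σ k)) '' S) ≤
        RingHom.ker (killS S (k := k) (σ := σ)).toRingHom := by
      rw [Ideal.span_le]
      rintro x ⟨i, hi, rfl⟩
      simp only [SetLike.mem_coe, RingHom.mem_ker, AlgHom.toRingHom_eq_coe, RingHom.coe_coe]
      rw [killS]
      simp [aeval_X, if_pos hi]
    exact hle hf
  · intro hf
    rw [show (fun i => (X i : MvPolynomial σ k)) '' S = X '' S from rfl,
      mem_ideal_span_X_image]
    intro d hd
    by_contra hcon
    push_neg at hcon
    have hco : coeff d (killS S f) = coeff d f := by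
      conv_lhs => rw [f.as_sum]
      rw [map_sum, coeff_sum]
      rw [Finset.sum_eq_single_of_mem d hd]
      · rw [killS_monomial_id S d _ hcon, coeff_monomial, if_pos rfl]
      · intro e _ hne
        by_cases hz : ∀ i ∈ S, e i = 0
        · rw [killS_monomial_id S e _ hz, coeff_monomial, if_neg hne]
        · push_neg at hz
          obtain ⟨i, hi, hzi⟩ := hz
          rw [killS_monomial_zero S e _ i hi hzi, coeff_zero]
    rw [hf, coeff_zero] at hco
    exact MvPolynomial.mem_support_iff.mp hd hco.symm

theorem isPrime_span_X (S : Set σ) :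
    (Ideal.span ((fun i => (X i : MvPolynomial σ k)) '' S)).IsPrime := by
  rw [Ideal.isPrime_iff]
  constructor
  · intro h
    have h1 : (1 : MvPolynomial σ k) ∈ Ideal.span ((fun i => (X i : MvPolynomial σ k)) '' S) := by
      rw [h]; trivial
    rw [mem_span_X_iff_killS, map_one] at h1
    exact one_ne_zero h1
  · intro f g hfg
    rw [mem_span_X_iff_killS, map_mul] at hfg
    rcases mul_eq_zero.mp hfg with h | h
    · exact Or.inl ((mem_span_X_iff_killS S f).mpr h)
    · exact Or.inr ((mem_span_X_iff_killS S g).mpr h)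

/-- Characterisation of variable-generated associated primes of the quotient by a
monomial ideal in terms of exponent combinatorics. -/
theorem ass_iff [Finite σ] (u : Fin q → σ →₀ ℕ) (G : Fin q → MvPolynomial σ k)
    (hG : ∀ t, G t = monomial (u t) 1) (S : Set σ) :
    Ideal.span ((fun i => (X i : MvPolynomial σ k)) '' S) ∈
      associatedPrimes (MvPolynomial σ k)
        (MvPolynomial σ k ⧸ Ideal.span (Set.range G)) ↔
    ∃ b : σ →₀ ℕ, (∀ i ∈ S, ∃ t, u t ≤ b + Finsupp.single i 1) ∧
      (∀ t, ∃ i ∈ S, b i < u t i) := by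
  classical
  set I : Ideal (MvPolynomial σ k) := Ideal.span (Set.range G) with hI
  set P : Ideal (MvPolynomial σ k) :=
    Ideal.span ((fun i => (X i : MvPolynomial σ k)) '' S) with hP
  have hIgen : I = Ideal.span (Set.range fun t => (monomial (u t) (1 : k))) := by
    rw [hI, show G = (fun t => monomial (u t) (1 : k)) from funext hG]
  have memI : ∀ f : MvPolynomial σ k, f ∈ I ↔ ∀ d ∈ f.support, ∃ t, u t ≤ d := by
    intro f; rw [hIgen]; exact mem_monomial_ideal u f
  have memP : ∀ f : MvPolynomial σ k, f ∈ P ↔ ∀ d ∈ f.support, ∃ i ∈ S, d i ≠ 0 := by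
    intro f
    rw [hP, show (fun i => (X i : MvPolynomial σ k)) '' S = X '' S from rfl]
    exact mem_ideal_span_X_image
  have hann : ∀ f g : MvPolynomial σ k,
      g ∈ (⊥ : Submodule (MvPolynomial σ k) (MvPolynomial σ k ⧸ I)).colon
          {(Ideal.Quotient.mk I f)} ↔ g * f ∈ I := by
    intro f g
    rw [Submodule.mem_colon_singleton, Submodule.mem_bot,
      show g • (Ideal.Quotient.mk I f) = Ideal.Quotient.mk I (g * f) from rfl,
      Ideal.Quotient.eq_zero_iff_mem]
  have hXP : ∀ i ∈ S, (X i : MvPolynomial σ k) ∈ P := by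
    intro i hiS
    rw [hP]
    exact Ideal.subset_span ⟨i, hiS, rfl⟩
  rw [AssociatedPrimes.mem_iff, isAssociatedPrime_iff]
  constructor
  · rintro ⟨hPrime, x, hx⟩
    obtain ⟨f, rfl⟩ := Ideal.Quotient.mk_surjective x
    have hcol : ∀ g, g ∈ P ↔ g * f ∈ I := by
      intro g
      rw [hx]
      exact hann f g
    have hfsupp : f.support.Nonempty := by
      rcases Finset.eq_empty_or_nonempty f.support with h | h
      · exfalso
        have hf0 : f = 0 := support_eq_empty.mp h
        have h1 : (1 : MvPolynomial σ k) ∈ P := by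
          rw [hcol 1, hf0, mul_zero]
          exact zero_mem I
        exact hPrime.ne_top ((Ideal.eq_top_iff_one P).mpr h1)
      · exact h
    set J : (σ →₀ ℕ) → Ideal (MvPolynomial σ k) :=
      fun d => I.colon (Ideal.span {(monomial d 1 : MvPolynomial σ k)}) with hJ
    have memJ : ∀ d (g : MvPolynomial σ k), g ∈ J d ↔ g * monomial d 1 ∈ I := by
      intro d g
      rw [hJ]
      exact Ideal.mem_colon_span_singleton
    have hPJ : ∀ d ∈ f.support, P ≤ J d := by
      intro d hd
      rw [hP, Ideal.span_le]
      rintro x ⟨i, hiS, rfl⟩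
      have hXf : (X i : MvPolynomial σ k) * f ∈ I := by
        rw [← hcol]; exact hXP i hiS
      have hsup : (d + Finsupp.single i 1) ∈ ((X i : MvPolynomial σ k) * f).support := by
        rw [mul_comm, hXmono, mem_support_iff, coeff_mul_monomial', if_pos le_add_self,
          add_tsub_cancel_right, mul_one]
        exact mem_support_iff.mp hd
      obtain ⟨t, ht⟩ := (memI _).mp hXf _ hsup
      simp only [SetLike.mem_coe]
      rw [memJ, hXmono, monomial_mul, one_mul, memI]
      intro e he
      rw [support_monomial, if_neg one_ne_zero, Finset.mem_singleton] at he
      subst he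
      exact ⟨t, by rwa [add_comm] at ht⟩
    have hprod : (∏ d ∈ f.support, J d) ≤ P := by
      intro g hg
      have hginf : ∀ d ∈ f.support, g ∈ J d := by
        intro d hd
        exact Submodule.mem_finsetInf.mp (Ideal.prod_le_inf hg) d hd
      rw [hcol]
      have hgf : g * f = ∑ d ∈ f.support, C (coeff d f) * (g * monomial d 1) := by
        conv_lhs => rw [f.as_sum, Finset.mul_sum]
        refine Finset.sum_congr rfl fun d _ => ?_
        rw [show (monomial d (coeff d f) : MvPolynomial σ k) = C (coeff d f) * monomial d 1 by
          rw [C_mul_monomial, mul_one]]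
        ring
      rw [hgf]
      exact Ideal.sum_mem _ fun d hd => Ideal.mul_mem_left _ _ ((memJ d g).mp (hginf d hd))
    obtain ⟨d0, hd0, hJP⟩ := (hPrime.prod_le).mp hprod
    have hJeq : J d0 = P := le_antisymm hJP (hPJ d0 hd0)
    refine ⟨d0, ?_, ?_⟩
    · intro i hiS
      have hXi : (X i : MvPolynomial σ k) ∈ J d0 := hJeq ▸ hXP i hiS
      rw [memJ, hXmono, monomial_mul, one_mul, memI] at hXi
      obtain ⟨t, ht⟩ := hXi _ (by
        rw [support_monomial, if_neg one_ne_zero, Finset.mem_singleton])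
      exact ⟨t, by rwa [add_comm] at ht⟩
    · intro t
      have hg : (monomial (u t - d0) 1 : MvPolynomial σ k) ∈ J d0 := by
        rw [memJ, monomial_mul, one_mul, memI]
        intro e he
        rw [support_monomial, if_neg one_ne_zero, Finset.mem_singleton] at he
        subst he
        exact ⟨t, le_tsub_add⟩
      rw [hJeq, memP] at hg
      obtain ⟨i, hiS, hne⟩ := hg _ (by
        rw [support_monomial, if_neg one_ne_zero, Finset.mem_singleton])
      refine ⟨i, hiS, ?_⟩
      rw [Finsupp.tsub_apply] at hne
      omega
  · rintro ⟨b, hb1, hb2⟩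
    refine ⟨isPrime_span_X S, Ideal.Quotient.mk I (monomial b 1), ?_⟩
    ext g
    rw [hann (monomial b 1) g, memI, memP]
    have hsup : ∀ e, e ∈ (g * monomial b (1 : k)).support ↔ b ≤ e ∧ (e - b) ∈ g.support := by
      intro e
      rw [mem_support_iff, coeff_mul_monomial']
      constructor
      · intro h
        by_cases hbe : b ≤ e
        · rw [if_pos hbe, mul_one] at h
          exact ⟨hbe, mem_support_iff.mpr h⟩
        · rw [if_neg hbe] at h
          exact absurd rfl h
      · rintro ⟨hbe, hd⟩
        rw [if_pos hbe, mul_one]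
        exact mem_support_iff.mp hd
    constructor
    · intro h e he
      rw [hsup] at he
      obtain ⟨hbe, hd⟩ := he
      obtain ⟨i, hiS, hne⟩ := h _ hd
      obtain ⟨t, ht⟩ := hb1 i hiS
      refine ⟨t, le_trans ht ?_⟩
      rw [Finsupp.le_def]
      intro j
      rw [Finsupp.add_apply, Finsupp.single_apply]
      have hbej := (Finsupp.le_def.mp hbe) j
      have htsub : (e - b) i = e i - b i := Finsupp.tsub_apply _ _ _
      by_cases hji : i = j
      · subst hji
        rw [if_pos rfl]
        rw [htsub] at hne
        omega
      · rw [if_neg hji]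
        omega
    · intro h d hd
      have hmem : (d + b) ∈ (g * monomial b (1 : k)).support := by
        rw [hsup]
        exact ⟨le_add_self, by rwa [add_tsub_cancel_right]⟩
      obtain ⟨t, ht⟩ := h _ hmem
      obtain ⟨i, hiS, hlt⟩ := hb2 t
      refine ⟨i, hiS, ?_⟩
      have h2 : u t i ≤ d i + b i := by
        have h3 := (Finsupp.le_def.mp ht) i
        simpa using h3
      omega


end Alg

/-! ### The statement -/

/-- The monomial `x_1^{a_1} ⋯ x_n^{a_n}` with exponent vector `a`. -/
noncomputable def mon (k : Type) [Field k] {n : ℕ} (a : Fin n → ℕ) :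
    MvPolynomial (Fin n) k :=
  ∏ i, X i ^ a i

/-- The polarization of the monomial with exponent vector `a`: the square-free monomial
`∏_i ∏_{j < a_i} x_{i,j}` in the doubly-indexed variables `x_{i,j}`, `0 ≤ j ≤ m`. -/
noncomputable def polar (k : Type) [Field k] (m : ℕ) {n : ℕ} (a : Fin n → ℕ) :
    MvPolynomial (Fin n × Fin (m + 1)) k :=
  ∏ i, ∏ j ∈ Finset.univ.filter fun j : Fin (m + 1) => (j : ℕ) < a i, X (i, j)


/-- The monomial ideal generated by the monomials with exponent vectors `A t`. -/
noncomputable def monIdeal (k : Type) [Field k] {n q : ℕ} (A : Fin q → Fin n → ℕ) :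
    Ideal (MvPolynomial (Fin n) k) :=
  Ideal.span (Set.range fun t => mon k (A t))

/-- The polarization of the monomial ideal generated by the monomials `A t`:
the square-free monomial ideal generated by the polarizations of the generators. -/
noncomputable def polarIdeal (k : Type) [Field k] (m : ℕ) {n q : ℕ}
    (A : Fin q → Fin n → ℕ) : Ideal (MvPolynomial (Fin n × Fin (m + 1)) k) :=
  Ideal.span (Set.range fun t => polar k m (A t))

theorem mon_eq (k : Type) [Field k] {n : ℕ} (a : Fin n → ℕ) :
    mon k a = monomial (Finsupp.equivFunOnFinite.symm a) 1 := by
  rw [mon]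
  have hexp : (∑ i : Fin n, Finsupp.single i (a i)) = Finsupp.equivFunOnFinite.symm a := by
    ext i
    rw [Finsupp.finset_sum_apply, Finset.sum_congr rfl fun x _ => Finsupp.single_apply,
      Finset.sum_ite_eq' Finset.univ i]
    simp
  rw [Finset.prod_congr rfl fun i _ =>
    (X_pow_eq_monomial : (X i : MvPolynomial (Fin n) k) ^ a i = _), prod_monomial_one, hexp]

theorem polar_eq (k : Type) [Field k] (m : ℕ) {n : ℕ} (a : Fin n → ℕ) :
    polar k m a = monomial (Finsupp.equivFunOnFinite.symm
      (fun p : Fin n × Fin (m + 1) => if (p.2 : ℕ) < a p.1 then 1 else 0)) 1 := by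
  classical
  rw [polar]
  rw [Finset.prod_congr rfl fun (i : Fin n) _ => Finset.prod_congr rfl
    fun (j : Fin (m+1)) _ => (hXmono ((i, j) : Fin n × Fin (m+1)) : _)]
  have hexp : (∑ i : Fin n, ∑ j ∈ (Finset.univ.filter fun j : Fin (m+1) => (j : ℕ) < a i),
      Finsupp.single ((i, j) : Fin n × Fin (m+1)) 1) = Finsupp.equivFunOnFinite.symm
      (fun p : Fin n × Fin (m + 1) => if (p.2 : ℕ) < a p.1 then 1 else 0) := by
    ext p
    obtain ⟨p1, p2⟩ := p
    rw [Finsupp.finset_sum_apply]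
    have hsum : ∀ i : Fin n,
        ((∑ j ∈ (Finset.univ.filter fun j : Fin (m+1) => (j : ℕ) < a i),
          Finsupp.single ((i, j) : Fin n × Fin (m+1)) 1) : (Fin n × Fin (m+1)) →₀ ℕ) (p1, p2)
        = if i = p1 then (if (p2 : ℕ) < a i then 1 else 0) else 0 := by
      intro i
      rw [Finsupp.finset_sum_apply]
      rw [Finset.sum_congr rfl (fun j _ => show (Finsupp.single ((i, j) : Fin n × Fin (m+1)) 1)
        (p1, p2) = if j = p2 then (if i = p1 then (1:ℕ) else 0) else 0 by
        rw [Finsupp.single_apply]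
        by_cases h1 : i = p1 <;> by_cases h2 : j = p2 <;> simp [h1, h2, Prod.ext_iff])]
      rw [Finset.sum_ite_eq']
      simp only [Finset.mem_filter, Finset.mem_univ, true_and]
      by_cases h2 : (p2 : ℕ) < a i <;> by_cases h1 : i = p1 <;> simp [h1, h2]
    rw [Finset.sum_congr rfl fun i _ => hsum i]
    rw [Finset.sum_ite_eq' Finset.univ p1]
    simp
  rw [Finset.prod_congr rfl fun (i : Fin n) _ => prod_monomial_one _ _, prod_monomial_one, hexp]


/-! ### Bridges between `Finsupp` conditions and the combinatorial conditions -/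

section Bridge
variable {k : Type} [Field k] {n q m : ℕ} (A : Fin q → Fin n → ℕ) (s : Finset (Fin n))

theorem bridgeR :
    (∃ b : Fin n →₀ ℕ,
      (∀ i ∈ (↑s : Set (Fin n)), ∃ t,
        Finsupp.equivFunOnFinite.symm (A t) ≤ b + Finsupp.single i 1) ∧
      (∀ t, ∃ i ∈ (↑s : Set (Fin n)), b i < (Finsupp.equivFunOnFinite.symm (A t)) i)) ↔
    ∃ b : Fin n → ℕ, CRfun A s b := by
  constructor
  · rintro ⟨b, h1, h2⟩
    refine ⟨⇑b, ?_, ?_⟩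
    · intro i hi
      obtain ⟨t, ht⟩ := h1 i (Finset.mem_coe.mpr hi)
      refine ⟨t, fun i' => ?_⟩
      have h3 := (Finsupp.le_def.mp ht) i'
      simpa [Finsupp.single_apply] using h3
    · intro t
      obtain ⟨i, hi, hlt⟩ := h2 t
      exact ⟨i, Finset.mem_coe.mp hi, by simpa using hlt⟩
  · rintro ⟨b, h1, h2⟩
    refine ⟨Finsupp.equivFunOnFinite.symm b, ?_, ?_⟩
    · intro i hi
      obtain ⟨t, ht⟩ := h1 i (Finset.mem_coe.mp hi)
      refine ⟨t, Finsupp.le_def.mpr fun i' => ?_⟩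
      have h3 := ht i'
      simpa [Finsupp.single_apply] using h3
    · intro t
      obtain ⟨i, hi, hlt⟩ := h2 t
      exact ⟨i, Finset.mem_coe.mpr hi, by simpa using hlt⟩

theorem bridgeS (c : Fin n → Fin (m + 1)) :
    (∃ E : (Fin n × Fin (m + 1)) →₀ ℕ,
      (∀ p ∈ ((fun i => (i, c i)) '' (↑s : Set (Fin n))), ∃ t,
        (Finsupp.equivFunOnFinite.symm fun p : Fin n × Fin (m + 1) =>
          if (p.2 : ℕ) < A t p.1 then 1 else 0) ≤ E + Finsupp.single p 1) ∧
      (∀ t, ∃ p ∈ ((fun i => (i, c i)) '' (↑s : Set (Fin n))),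
        E p < (Finsupp.equivFunOnFinite.symm fun p : Fin n × Fin (m + 1) =>
          if (p.2 : ℕ) < A t p.1 then 1 else 0) p)) ↔
    ∃ E : Fin n × Fin (m + 1) → ℕ, CSfun A s c E := by
  constructor
  · rintro ⟨E, h1, h2⟩
    refine ⟨⇑E, ?_, ?_⟩
    · intro i hi
      obtain ⟨t, ht⟩ := h1 (i, c i) ⟨i, Finset.mem_coe.mpr hi, rfl⟩
      refine ⟨t, fun p hp => ?_⟩
      have h3 := (Finsupp.le_def.mp ht) p
      simp only [Finsupp.coe_equivFunOnFinite_symm, Finsupp.add_apply,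
        Finsupp.single_apply] at h3
      rwa [if_pos hp] at h3
    · intro t
      obtain ⟨p, ⟨i, hi, rfl⟩, hlt⟩ := h2 t
      simp only [Finsupp.coe_equivFunOnFinite_symm] at hlt
      by_cases hc : ((c i : ℕ)) < A t i
      · rw [if_pos hc] at hlt
        exact ⟨i, Finset.mem_coe.mp hi, hc, by omega⟩
      · rw [if_neg hc] at hlt
        omega
  · rintro ⟨E, h1, h2⟩
    refine ⟨Finsupp.equivFunOnFinite.symm E, ?_, ?_⟩
    · rintro p ⟨i, hi, rfl⟩
      obtain ⟨t, ht⟩ := h1 i (Finset.mem_coe.mp hi)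
      refine ⟨t, Finsupp.le_def.mpr fun p' => ?_⟩
      simp only [Finsupp.coe_equivFunOnFinite_symm, Finsupp.add_apply,
        Finsupp.single_apply]
      by_cases hp : (p'.2 : ℕ) < A t p'.1
      · rw [if_pos hp]
        exact ht p' hp
      · rw [if_neg hp]
        omega
    · intro t
      obtain ⟨i, hi, hc, hE⟩ := h2 t
      refine ⟨(i, c i), ⟨i, Finset.mem_coe.mpr hi, rfl⟩, ?_⟩
      simp only [Finsupp.coe_equivFunOnFinite_symm]
      rw [if_pos hc]
      omega

end Bridge

/-- `(x_{i₁},…,x_{i_r})` is an associated prime of `R/I` iff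
`(x_{i₁,c₁},…,x_{i_r,c_r})` is an associated prime of `S/𝒫(I)` for some positive
integers `c_j` (0-based here: some `c : Fin n → Fin (m+1)`). -/
theorem polar_associatedPrimes (k : Type) [Field k] (m n q : ℕ)
    (A : Fin q → Fin n → ℕ) (hA : ∀ t i, A t i ≤ m + 1) (s : Finset (Fin n)) :
    Ideal.span ((fun i => (X i : MvPolynomial (Fin n) k)) '' s) ∈
        associatedPrimes (MvPolynomial (Fin n) k)
          (MvPolynomial (Fin n) k ⧸ monIdeal k A) ↔
      ∃ c : Fin n → Fin (m + 1),
        Ideal.span ((fun i =>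
            (X (i, c i) : MvPolynomial (Fin n × Fin (m + 1)) k)) '' s) ∈
          associatedPrimes (MvPolynomial (Fin n × Fin (m + 1)) k)
            (MvPolynomial (Fin n × Fin (m + 1)) k ⧸ polarIdeal k m A) := by
  classical
  unfold monIdeal polarIdeal
  have hL := ass_iff (k := k) (fun t => Finsupp.equivFunOnFinite.symm (A t))
    (fun t => mon k (A t)) (fun t => mon_eq k (A t)) (↑s : Set (Fin n))
  have hR : ∀ c : Fin n → Fin (m + 1),
      (Ideal.span ((fun i =>
          (X (i, c i) : MvPolynomial (Fin n × Fin (m + 1)) k)) '' ↑s) ∈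
        associatedPrimes (MvPolynomial (Fin n × Fin (m + 1)) k)
          (MvPolynomial (Fin n × Fin (m + 1)) k ⧸
            Ideal.span (Set.range fun t => polar k m (A t)))) ↔
      ∃ E : (Fin n × Fin (m + 1)) →₀ ℕ,
        (∀ p ∈ ((fun i => (i, c i)) '' (↑s : Set (Fin n))), ∃ t,
          (Finsupp.equivFunOnFinite.symm fun p : Fin n × Fin (m + 1) =>
            if (p.2 : ℕ) < A t p.1 then 1 else 0) ≤ E + Finsupp.single p 1) ∧
        (∀ t, ∃ p ∈ ((fun i => (i, c i)) '' (↑s : Set (Fin n))),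
          E p < (Finsupp.equivFunOnFinite.symm fun p : Fin n × Fin (m + 1) =>
            if (p.2 : ℕ) < A t p.1 then 1 else 0) p) := by
    intro c
    have himg : ((fun i => (X (i, c i) : MvPolynomial (Fin n × Fin (m + 1)) k)) '' ↑s)
        = ((fun p => (X p : MvPolynomial (Fin n × Fin (m + 1)) k)) ''
            ((fun i => (i, c i)) '' (↑s : Set (Fin n)))) := (Set.image_image _ _ _).symm
    rw [himg]
    exact ass_iff (k := k)
      (fun t => Finsupp.equivFunOnFinite.symm fun p : Fin n × Fin (m + 1) =>
        if (p.2 : ℕ) < A t p.1 then 1 else 0)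
      (fun t => polar k m (A t)) (fun t => polar_eq k m (A t)) _
  rw [hL, bridgeR A s]
  constructor
  · rintro ⟨b, hb⟩
    obtain ⟨c, E, hcs⟩ := comb_forward A s hA hb
    exact ⟨c, (hR c).mpr ((bridgeS A s c).mpr ⟨E, hcs⟩)⟩
  · rintro ⟨c, hc⟩
    obtain ⟨E, hcs⟩ := (bridgeS A s c).mp ((hR c).mp hc)
    exact comb_backward A s hA hcs
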